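/- Let φ be a bijective morphism between abstract delta sequences (X₁, Δ₁) and (X₂, Δ₂) which is right-veering, meaning: φ restricted to S₁ and to Q₁ is order preserving; for x ∈ S₁, y ∈ Q₁ with x < y one has φ(x) < φ(y); and Δ₂(φ(z)) = Δ₁(z) for all z. Then min τ₁ ≤ min τ₂, where τᵢ are the partial sum functions. -/
import Mathlib


open Finset

/-- The minimum of the partial-sum function `τ(z) = Σ_{w < z} Δ(w)` over
`X⁺ = X ∪ {top}` (the value at the top element is the full sum). -/
def minTau {α : Type*} [LinearOrder α] [DecidableEq α]
    (X : Finset α) (Δ : α → ℤ) : ℤ :=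
  ((X.image fun z => ∑ w ∈ X.filter (· < z), Δ w) ∪ {∑ w ∈ X, Δ w}).min'
    ⟨_, Finset.mem_union_right _ (Finset.mem_singleton_self _)⟩

lemma minTau_le_zero {α : Type*} [LinearOrder α] [DecidableEq α]
    (X : Finset α) (Δ : α → ℤ) (hX : X.Nonempty) : minTau X Δ ≤ 0 := by
  apply Finset.min'_le
  apply Finset.mem_union_left
  refine Finset.mem_image.2 ⟨X.min' hX, X.min'_mem hX, ?_⟩
  apply Finset.sum_eq_zero
  intro w hw
  obtain ⟨hwX, hwlt⟩ := Finset.mem_filter.1 hw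
  exact absurd hwlt (not_lt.2 (X.min'_le _ hwX))

lemma minTau_le_sum {α : Type*} [LinearOrder α] [DecidableEq α]
    (X : Finset α) (Δ : α → ℤ) (hX : X.Nonempty) (hnz : ∀ z ∈ X, Δ z ≠ 0)
    (A : Finset α) (hA : A ⊆ X)
    (hclosed : ∀ y ∈ A, Δ y < 0 → ∀ u ∈ X, u < y → u ∈ A) :
    minTau X Δ ≤ ∑ u ∈ A, Δ u := by
  by_cases hN : (A.filter (fun y => Δ y < 0)).Nonempty
  · set N := A.filter (fun y => Δ y < 0) with hNdef
    set y0 := N.max' hN with hy0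
    have hy0mem := N.max'_mem hN
    have hy0A : y0 ∈ A := (Finset.mem_filter.1 hy0mem).1
    have hy0neg : Δ y0 < 0 := (Finset.mem_filter.1 hy0mem).2
    set B := X.filter (fun u => u ≤ y0) with hB
    have hBA : B ⊆ A := by
      intro u hu
      obtain ⟨huX, hule⟩ := Finset.mem_filter.1 hu
      rcases eq_or_lt_of_le hule with h | h
      · exact h ▸ hy0A
      · exact hclosed y0 hy0A hy0neg u huX h
    have hsum : ∑ u ∈ B, Δ u ≤ ∑ u ∈ A, Δ u := by
      have hsd := Finset.sum_sdiff (f := Δ) hBA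
      have hpos : 0 ≤ ∑ u ∈ A \ B, Δ u := by
        apply Finset.sum_nonneg
        intro u hu
        obtain ⟨huA, hunB⟩ := Finset.mem_sdiff.1 hu
        have huX := hA huA
        rcases lt_or_gt_of_ne (hnz u huX) with hlt | hgt
        · have huN : u ∈ N := Finset.mem_filter.2 ⟨huA, hlt⟩
          have : u ≤ y0 := N.le_max' u huN
          have huB : u ∈ B := by rw [hB]; exact Finset.mem_filter.2 ⟨huX, this⟩
          exact absurd huB hunB
        · exact hgt.le
      linarith
    refine le_trans (Finset.min'_le _ _ ?_) hsum
    by_cases htop : (X.filter (fun z => y0 < z)).Nonempty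
    · apply Finset.mem_union_left
      set z1 := (X.filter (fun z => y0 < z)).min' htop with hz1
      have hz1mem := (X.filter (fun z => y0 < z)).min'_mem htop
      have hz1X : z1 ∈ X := (Finset.mem_filter.1 hz1mem).1
      have hz1gt : y0 < z1 := (Finset.mem_filter.1 hz1mem).2
      refine Finset.mem_image.2 ⟨z1, hz1X, ?_⟩
      have hfil : X.filter (· < z1) = B := by
        ext u
        simp only [Finset.mem_filter, hB]
        constructor
        · rintro ⟨huX, hu⟩
          refine ⟨huX, ?_⟩
          by_contra h
          push_neg at h
          have : z1 ≤ u := Finset.min'_le _ u (Finset.mem_filter.2 ⟨huX, h⟩)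
          exact absurd hu (not_lt.2 this)
        · rintro ⟨huX, hu⟩
          exact ⟨huX, lt_of_le_of_lt hu hz1gt⟩
      rw [hfil]
    · apply Finset.mem_union_right
      have hBX : B = X := by
        ext u
        simp only [Finset.mem_filter, hB]
        constructor
        · rintro ⟨h, _⟩; exact h
        · intro huX
          refine ⟨huX, ?_⟩
          by_contra h
          push_neg at h
          exact htop ⟨u, Finset.mem_filter.2 ⟨huX, h⟩⟩
      rw [hBX]
      exact Finset.mem_singleton_self _
  · refine le_trans (minTau_le_zero X Δ hX) (Finset.sum_nonneg ?_)
    intro u hu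
    have huX := hA hu
    rcases lt_or_gt_of_ne (hnz u huX) with h | h
    · exact absurd ⟨u, Finset.mem_filter.2 ⟨hu, h⟩⟩ hN
    · exact h.le

lemma sum_transfer {α β : Type*} [DecidableEq α] [DecidableEq β]
    (X₁ : Finset α) (Δ₁ : α → ℤ) (X₂ : Finset β) (Δ₂ : β → ℤ)
    (φ : α → β) (hbij : Set.BijOn φ X₁ X₂)
    (hdelta : ∀ z ∈ X₁, Δ₂ (φ z) = Δ₁ z)
    (p : β → Prop) [DecidablePred p] :
    ∑ u ∈ X₁.filter (fun u => p (φ u)), Δ₁ u = ∑ w ∈ X₂.filter p, Δ₂ w := by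
  apply Finset.sum_bij (fun u (_ : u ∈ X₁.filter (fun u => p (φ u))) => φ u)
  · intro u hu
    obtain ⟨huX, hup⟩ := Finset.mem_filter.1 hu
    exact Finset.mem_filter.2 ⟨hbij.mapsTo huX, hup⟩
  · intro u hu v hv h
    exact hbij.injOn (Finset.mem_coe.2 (Finset.mem_filter.1 hu).1)
      (Finset.mem_coe.2 (Finset.mem_filter.1 hv).1) h
  · intro w hw
    obtain ⟨hwX, hwp⟩ := Finset.mem_filter.1 hw
    obtain ⟨u, huX, hu⟩ := hbij.surjOn hwX
    exact ⟨u, Finset.mem_filter.2 ⟨huX, hu ▸ hwp⟩, hu⟩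
  · intro u hu
    exact (hdelta u (Finset.mem_filter.1 hu).1).symm

/-- A right-veering (bijective) morphism between abstract delta sequences
satisfies `min τ₁ ≤ min τ₂`. -/
theorem minTau_rightVeering {α β : Type*} [LinearOrder α] [DecidableEq α]
    [LinearOrder β] [DecidableEq β]
    (X₁ : Finset α) (Δ₁ : α → ℤ) (hX₁ : X₁.Nonempty)
    (hnz₁ : ∀ z ∈ X₁, Δ₁ z ≠ 0) (hmin₁ : 0 < Δ₁ (X₁.min' hX₁))
    (X₂ : Finset β) (Δ₂ : β → ℤ) (hX₂ : X₂.Nonempty)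
    (hnz₂ : ∀ z ∈ X₂, Δ₂ z ≠ 0) (hmin₂ : 0 < Δ₂ (X₂.min' hX₂))
    (φ : α → β) (hbij : Set.BijOn φ X₁ X₂)
    (hdelta : ∀ z ∈ X₁, Δ₂ (φ z) = Δ₁ z)
    (hmorS : ∀ x ∈ X₁, 0 < Δ₁ x → 0 < Δ₂ (φ x))
    (hmorQ : ∀ y ∈ X₁, Δ₁ y < 0 → Δ₂ (φ y) < 0)
    (hordS : ∀ x ∈ X₁, ∀ x' ∈ X₁, 0 < Δ₁ x → 0 < Δ₁ x' → x < x' → φ x < φ x')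
    (hordQ : ∀ y ∈ X₁, ∀ y' ∈ X₁, Δ₁ y < 0 → Δ₁ y' < 0 → y < y' → φ y < φ y')
    (hcross : ∀ x ∈ X₁, ∀ y ∈ X₁, 0 < Δ₁ x → Δ₁ y < 0 → x < y → φ x < φ y) :
    minTau X₁ Δ₁ ≤ minTau X₂ Δ₂ := by
  apply Finset.le_min'
  intro b hb
  rcases Finset.mem_union.1 hb with hb | hb
  · obtain ⟨z2, hz2, rfl⟩ := Finset.mem_image.1 hb
    rw [← sum_transfer X₁ Δ₁ X₂ Δ₂ φ hbij hdelta (fun w => w < z2)]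
    apply minTau_le_sum X₁ Δ₁ hX₁ hnz₁ _ (Finset.filter_subset _ _)
    intro y hy hyneg u huX hu
    obtain ⟨hyX, hyφ⟩ := Finset.mem_filter.1 hy
    refine Finset.mem_filter.2 ⟨huX, ?_⟩
    rcases lt_or_gt_of_ne (hnz₁ u huX) with h | h
    · exact lt_trans (hordQ u huX y hyX h hyneg hu) hyφ
    · exact lt_trans (hcross u huX y hyX h hyneg hu) hyφ
  · rw [Finset.mem_singleton.1 hb]
    have htot : ∑ w ∈ X₂, Δ₂ w = ∑ u ∈ X₁, Δ₁ u := by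
      have := sum_transfer X₁ Δ₁ X₂ Δ₂ φ hbij hdelta (fun _ => True)
      simpa using this.symm
    rw [htot]
    exact Finset.min'_le _ _ (Finset.mem_union_right _ (Finset.mem_singleton_self _))
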